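/- arXiv:2101.06527 — 5 statements merged into one kernel-verified Lean document; each statement's English description precedes it below -/
import Mathlib

section
/- Let A be a multiring. Then every maximal ideal of A is a prime ideal. -/
/-!
If `ab ∈ I` and `a ∉ I`, maximality forces `1` into the ideal generated by `I` and `a`, i.e. `1` lies
in a hypersum of elements of `I` and multiples of `a`. Weak distributivity lets us multiply that
hypersum by `b`: then `b` lies in a hypersum of elements of `I` (since `tab ∈ I`), so `b ∈ I`.
-/

universe u v

/-- A multiring: a commutative monoid with a multivalued addition. -/
class Multiring (A : Type u) extends CommMonoid A, Zero A, Neg A where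
  /-- the multivalued sum: `madd b c` is the set `b + c` -/
  madd : A → A → Set A
  madd_nonempty : ∀ a b : A, (madd a b).Nonempty
  madd_rev_left : ∀ a b c : A, a ∈ madd b c → c ∈ madd (-b) a
  madd_rev_right : ∀ a b c : A, a ∈ madd b c → b ∈ madd a (-c)
  mem_madd_zero : ∀ a b : A, a ∈ madd b 0 ↔ a = b
  madd_assoc : ∀ a b c g x : A, g ∈ madd a b → x ∈ madd g c →
    ∃ h ∈ madd b c, x ∈ madd a h
  madd_comm : ∀ a b : A, madd a b = madd b a
  mul_zero' : ∀ a : A, a * 0 = 0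
  madd_mul : ∀ a b c d : A, a ∈ madd b c → a * d ∈ madd (b * d) (c * d)

namespace Multiring

variable {A : Type u} [Multiring A]

/-- the iterated multivalued sum `x₁ + ⋯ + xₙ = {x₁} + (x₂ + ⋯ + xₙ)` of a list -/
def listSum : List A → Set A
  | [] => {(0 : A)}
  | a :: l => {x : A | ∃ y ∈ listSum l, x ∈ madd a y}

/-- an ideal of a multiring: a nonempty subset with `I + I ⊆ I` and `A·I ⊆ I` -/
def IsIdeal (I : Set A) : Prop :=
  I.Nonempty ∧ (∀ a ∈ I, ∀ b ∈ I, madd a b ⊆ I) ∧ ∀ a : A, ∀ b ∈ I, a * b ∈ I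

/-- a prime ideal: a proper ideal such that `a*b ∈ p → a ∈ p ∨ b ∈ p` -/
def IsPrimeIdeal (I : Set A) : Prop :=
  IsIdeal I ∧ (1 : A) ∉ I ∧ ∀ a b : A, a * b ∈ I → a ∈ I ∨ b ∈ I

/-- a maximal ideal: a proper ideal maximal among proper ideals -/
def IsMaximalIdeal (I : Set A) : Prop :=
  IsIdeal I ∧ (1 : A) ∉ I ∧ ∀ J : Set A, IsIdeal J → (1 : A) ∉ J → I ⊆ J → J = I

/-- a multiplicative subset -/
def IsMultiplicative (S : Set A) : Prop :=
  (1 : A) ∈ S ∧ ∀ s ∈ S, ∀ t ∈ S, s * t ∈ S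

/-- a hyperring: a multiring with the strong distributivity property -/
def IsHyperring (A : Type u) [Multiring A] : Prop :=
  ∀ x b c d : A, x ∈ madd (b * d) (c * d) → ∃ a ∈ madd b c, x = a * d

/-- a von Neumann (regular) hyperring -/
def IsVonNeumann (A : Type u) [Multiring A] : Prop :=
  IsHyperring A ∧ ∀ a : A, ∃ b : A, a = a * a * b

/-- the equivalence modulo an ideal `I`: `a ∼_I b` iff `(a + (-b)) ∩ I ≠ ∅`;
this is equality of classes in the quotient multiring `A/I`. -/
def simI (I : Set A) (a b : A) : Prop := ∃ x ∈ madd a (-b), x ∈ I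

/-- membership of classes in the multivalued sum of the quotient `A/I`:
`[a] ∈ [b] + [c]` iff `a ∈ b + c + i` for some `i ∈ I`. -/
def qmemI (I : Set A) (a b c : A) : Prop := ∃ i ∈ I, ∃ w ∈ madd c i, a ∈ madd b w

/-- representatives `x` with `[x] ∈ [c₁] + ⋯ + [cₙ]` in the quotient `A/I` -/
def qlistSumI (I : Set A) : List A → Set A
  | [] => {x : A | simI I x 0}
  | c :: l => {x : A | ∃ y ∈ qlistSumI I l, qmemI I x c y}

/-- the quotient multiring `A/I` is a multifield: `1 ≠ 0` and every nonzero
element is weak-invertible -/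
def QuotIsMultifield (I : Set A) : Prop :=
  ¬ simI I 1 0 ∧
    ∀ a : A, ¬ simI I a 0 →
      ∃ l : List A, l ≠ [] ∧ (1 : A) ∈ qlistSumI I (l.map fun b => a * b)

/-- the quotient multiring `A/I` is a hyperfield: `1 ≠ 0` and every nonzero
element is invertible -/
def QuotIsHyperfield (I : Set A) : Prop :=
  ¬ simI I 1 0 ∧ ∀ a : A, ¬ simI I a 0 → ∃ b : A, simI I (a * b) 1

/-- the Marshall equivalence associated to a multiplicative set `S`:
`a ∼_S b` iff `as = bt` for some `s,t ∈ S`; this is equality of classes in the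
Marshall quotient `A/ₘS`. -/
def simM (S : Set A) (a b : A) : Prop := ∃ s ∈ S, ∃ t ∈ S, a * s = b * t

/-- `S̄ = {x : xs ∈ S for some s ∈ S}` -/
def mbar (S : Set A) : Set A := {x : A | ∃ s ∈ S, x * s ∈ S}

/-- membership of classes in the multivalued sum of the Marshall quotient `A/ₘS`:
`[a] ∈ [b] + [c]` iff `as ∈ bt + cu` for some `s,t,u ∈ S`. -/
def qmemM (S : Set A) (a b c : A) : Prop :=
  ∃ s ∈ S, ∃ t ∈ S, ∃ u ∈ S, a * s ∈ madd (b * t) (c * u)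

/-- representatives `x` with `[x] ∈ [c₁] + ⋯ + [cₙ]` in the Marshall quotient `A/ₘS` -/
def qlistSumM (S : Set A) : List A → Set A
  | [] => {x : A | simM S x 0}
  | c :: l => {x : A | ∃ y ∈ qlistSumM S l, qmemM S x c y}

/-- the multivalued sum of the hyperfield `3 = {-1, 0, 1}` -/
def signAdd : SignType → SignType → Set SignType
  | SignType.zero, x => {x}
  | x, SignType.zero => {x}
  | SignType.pos, SignType.pos => {SignType.pos}
  | SignType.neg, SignType.neg => {SignType.neg}
  | _, _ => Set.univ

/-- a multiring morphism `A → 3`, i.e. an order of `A` -/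
def IsSignMorphism (σ : A → SignType) : Prop :=
  (∀ a b c : A, a ∈ madd b c → σ a ∈ signAdd (σ b) (σ c)) ∧
  (∀ a b : A, σ (a * b) = σ a * σ b) ∧
  (∀ a : A, σ (-a) = -(σ a)) ∧ σ 0 = 0 ∧ σ 1 = 1

/-- a prime cone of a multiring -/
def IsPrimeCone (P : Set A) : Prop :=
  (∀ a : A, a * a ∈ P) ∧ (∀ a ∈ P, ∀ b ∈ P, madd a b ⊆ P) ∧
  (∀ a ∈ P, ∀ b ∈ P, a * b ∈ P) ∧ (∀ a : A, a ∈ P ∨ -a ∈ P) ∧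
  IsPrimeIdeal {x : A | x ∈ P ∧ -x ∈ P}

open Classical in
/-- the map `σ_P : A → 3` associated to a prime cone `P` -/
noncomputable def sigmaOf (P : Set A) (a : A) : SignType :=
  if a ∈ P ∧ -a ∈ P then 0 else if a ∈ P then 1 else -1

/-- `ΣA²`: the set of elements lying in some finite sum of squares -/
def SumsOfSquares (A : Type u) [Multiring A] : Set A :=
  {x : A | ∃ l : List A, l ≠ [] ∧ x ∈ listSum (l.map fun a => a * a)}

/-- a multiring is semi-real when `-1 ∉ ΣA²` -/
def IsSemiReal (A : Type u) [Multiring A] : Prop := (-(1 : A)) ∉ SumsOfSquares A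

/-- a real reduced multiring -/
def IsRealReduced (A : Type u) [Multiring A] : Prop :=
  IsSemiReal A ∧ (∀ a : A, a * a * a = a) ∧
  (∀ a b : A, madd a (a * b * b) = {a}) ∧
  (∀ a b : A, ∃ c : A, madd (a * a) (b * b) = {c})

/-- a hyperfield: a hyperring with `1 ≠ 0` and all nonzero elements invertible -/
def IsHyperfield (A : Type u) [Multiring A] : Prop :=
  IsHyperring A ∧ (1 : A) ≠ 0 ∧ ∀ a : A, a ≠ 0 → ∃ b : A, a * b = 1

/-- a morphism of multirings -/
def IsMorphism {B : Type v} [Multiring B] (f : A → B) : Prop :=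
  (∀ a b c : A, a ∈ madd b c → f a ∈ madd (f b) (f c)) ∧
  (∀ a b : A, f (a * b) = f a * f b) ∧
  (∀ a : A, f (-a) = -(f a)) ∧ f 0 = 0 ∧ f 1 = 1

/-- the radical `√α = {x : xⁿ ∈ α for some n ≥ 1}` of an ideal -/
def radical (α : Set A) : Set A := {x : A | ∃ n : ℕ, 1 ≤ n ∧ x ^ n ∈ α}

/-- the ideal `(x) = ∪ {t₁x + ⋯ + tₙx}` generated by `x` -/
def genIdeal (x : A) : Set A :=
  {y : A | ∃ l : List A, l ≠ [] ∧ y ∈ listSum (l.map fun t => t * x)}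

/-- `S_a = {x : aⁿ ∈ (x) for some n ≥ 0}` -/
def Sgen (a : A) : Set A := {x : A | ∃ n : ℕ, a ^ n ∈ genIdeal x}

/-- `a` is weak-invertible when `1 ∈ ab₁ + ⋯ + abₙ` for some `b₁,…,bₙ` -/
def WeakInvertible (a : A) : Prop :=
  ∃ l : List A, l ≠ [] ∧ (1 : A) ∈ listSum (l.map fun b => a * b)

/-- the prime spectrum of a multiring -/
abbrev Spec (A : Type u) [Multiring A] : Type u := {p : Set A // IsPrimeIdeal p}

/-- the spectral topology on `spec A`, generated by the sets `D(a) = {p : a ∉ p}` -/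
instance : TopologicalSpace (Spec A) :=
  TopologicalSpace.generateFrom {U : Set (Spec A) | ∃ a : A, U = {p : Spec A | a ∉ p.1}}

/-- the Marshall quotient `A/ₘS` is a real reduced multiring (expressed on
representatives) -/
def QuotIsRealReduced (S : Set A) : Prop :=
  (∀ l : List A, l ≠ [] → (-(1 : A)) ∉ qlistSumM S (l.map fun a => a * a)) ∧
  (∀ a : A, simM S (a * a * a) a) ∧
  (∀ a b x : A, qmemM S x a (a * b * b) ↔ simM S x a) ∧
  (∀ a b : A, ∃ c : A, ∀ x : A, qmemM S x (a * a) (b * b) ↔ simM S x c)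

/-- the Marshall quotient `A/ₘS` is a geometric von Neumann hyperring
(expressed on representatives): it is a hyperring, von Neumann regular, and
`e + eᶜ = {1}` for every idempotent `e` -/
def QuotGeometricVN (S : Set A) : Prop :=
  (∀ x b c d : A, qmemM S x (b * d) (c * d) → ∃ a : A, qmemM S a b c ∧ simM S x (a * d)) ∧
  (∀ a : A, ∃ b : A, simM S a (a * a * b)) ∧
  (∀ e x : A, simM S (e * e) e → qmemM S x 1 (-e) → simM S (e * x) 0 →
    ∀ y : A, qmemM S y e x ↔ simM S y 1)

/-- a von Neumann subgroup: a multiplicative set such that for every idempotent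
`a` (with complement `aᶜ`) and every `x ∈ D_S(a, aᶜ)` there is `s ∈ S` with `xs ∈ S` -/
def IsVNSubgroup (S : Set A) : Prop :=
  IsMultiplicative S ∧
    ∀ a x ac : A, a * a = a → ac ∈ madd 1 (-a) → a * ac = 0 →
      (∃ u ∈ S, ∃ v ∈ S, ∃ w ∈ S, x * u ∈ madd (a * v) (ac * w)) →
      ∃ s ∈ S, x * s ∈ S

/-- a preorder of a multiring -/
def IsPreorderSet (T : Set A) : Prop :=
  (∀ a : A, a * a ∈ T) ∧ (∀ a ∈ T, ∀ b ∈ T, a * b ∈ T) ∧ (∀ a ∈ T, ∀ b ∈ T, madd a b ⊆ T)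

/-- `1 + T = ∪ {1 + t : t ∈ T}` -/
def oneAdd (T : Set A) : Set A := {x : A | ∃ t ∈ T, x ∈ madd 1 t}

/-- `ΣḞ²`: elements lying in some finite sum of squares of nonzero elements -/
def sumSqNonzero (A : Type u) [Multiring A] : Set A :=
  {x : A | ∃ l : List A, l ≠ [] ∧ (∀ a ∈ l, a ≠ 0) ∧ x ∈ listSum (l.map fun a => a * a)}

end Multiring

namespace Multiring

variable {A : Type u} [Multiring A]

theorem zero_mul' (a : A) : 0 * a = 0 := by
  rw [mul_comm, mul_zero']

theorem madd_subset_listSum_append :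
    ∀ (l₁ : List A) {l₂ : List A} {u v : A}, u ∈ listSum l₁ → v ∈ listSum l₂ →
      madd u v ⊆ listSum (l₁ ++ l₂)
  | [], l₂, u, v, hu, hv, x, hx => by
      rw [listSum, Set.mem_singleton_iff] at hu
      subst hu
      rw [madd_comm, mem_madd_zero] at hx
      simpa [hx] using hv
  | c :: l, l₂, u, v, ⟨y, hy, huy⟩, hv, x, hx => by
      obtain ⟨h, hh, hxh⟩ := madd_assoc c y v u x huy hx
      exact ⟨h, madd_subset_listSum_append l hy hv hh, hxh⟩

theorem mul_mem_listSum_map_mul (d : A) :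
    ∀ {l : List A} {u : A}, u ∈ listSum l → u * d ∈ listSum (l.map (· * d))
  | [], u, hu => by
      rw [listSum, Set.mem_singleton_iff] at hu
      simp [hu, listSum, zero_mul']
  | c :: l, u, ⟨y, hy, huy⟩ => ⟨y * d, mul_mem_listSum_map_mul d hy, madd_mul u c y d huy⟩

theorem IsIdeal.mul_mem {I : Set A} (hI : IsIdeal I) (a : A) {b : A} (hb : b ∈ I) : a * b ∈ I :=
  hI.2.2 a b hb

theorem IsIdeal.zero_mem {I : Set A} (hI : IsIdeal I) : (0 : A) ∈ I := by
  obtain ⟨i, hi⟩ := hI.1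
  simpa [zero_mul'] using hI.mul_mem 0 hi

theorem IsIdeal.listSum_subset {I : Set A} (hI : IsIdeal I) :
    ∀ {l : List A}, (∀ y ∈ l, y ∈ I) → listSum l ⊆ I
  | [], _ => by simpa [listSum] using hI.zero_mem
  | c :: l, hl => by
      rintro x ⟨y, hy, hxy⟩
      have hyI : y ∈ I := hI.listSum_subset (fun z hz => hl z (List.mem_cons_of_mem c hz)) hy
      exact hI.2.1 c (hl c List.mem_cons_self) y hyI hxy

def finiteSums (S : Set A) : Set A :=
  {x : A | ∃ l : List A, (∀ y ∈ l, y ∈ S) ∧ x ∈ listSum l}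

theorem subset_finiteSums (S : Set A) : S ⊆ finiteSums S :=
  fun s hs => ⟨[s], by simpa using hs, 0, rfl, (mem_madd_zero s s).mpr rfl⟩

theorem mul_mem_finiteSums {S T : Set A} {x : A} (d : A) (hx : x ∈ finiteSums S)
    (hST : ∀ s ∈ S, s * d ∈ T) : x * d ∈ finiteSums T := by
  obtain ⟨l, hl, hxl⟩ := hx
  refine ⟨l.map (· * d), ?_, mul_mem_listSum_map_mul d hxl⟩
  simp only [List.mem_map]
  rintro _ ⟨s, hs, rfl⟩
  exact hST s (hl s hs)

theorem isIdeal_finiteSums {S : Set A} (hS : ∀ a : A, ∀ s ∈ S, a * s ∈ S) :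
    IsIdeal (finiteSums S) := by
  refine ⟨⟨0, [], by simp, rfl⟩, ?_, fun c x hx => ?_⟩
  · rintro u ⟨l₁, hl₁, hu⟩ v ⟨l₂, hl₂, hv⟩ x hx
    refine ⟨l₁ ++ l₂, fun y hy => ?_, madd_subset_listSum_append l₁ hu hv hx⟩
    exact (List.mem_append.mp hy).elim (hl₁ y) (hl₂ y)
  · rw [mul_comm]
    exact mul_mem_finiteSums c hx fun s hs => mul_comm c s ▸ hS c s hs

theorem IsIdeal.finiteSums_subset {I : Set A} (hI : IsIdeal I) : finiteSums I ⊆ I :=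
  fun _ ⟨_, hl, hx⟩ => hI.listSum_subset hl hx

theorem IsMaximalIdeal.one_mem {I J : Set A} (hI : IsMaximalIdeal I) (hJ : IsIdeal J)
    (hIJ : I ⊆ J) {a : A} (haJ : a ∈ J) (haI : a ∉ I) : (1 : A) ∈ J := by
  by_contra h1
  exact haI (hI.2.2 J hJ h1 hIJ ▸ haJ)

end Multiring

/-- Every maximal ideal of a multiring is a prime ideal. -/
theorem maximalIdeal_isPrimeIdeal {A : Type u} [Multiring A] (I : Set A)
    (hI : Multiring.IsMaximalIdeal I) : Multiring.IsPrimeIdeal I := by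
  refine ⟨hI.1, hI.2.1, fun a b hab => or_iff_not_imp_left.mpr fun ha => ?_⟩
  set J := Multiring.finiteSums (I ∪ Set.range (· * a))
  have hJ : Multiring.IsIdeal J := by
    refine Multiring.isIdeal_finiteSums ?_
    rintro c _ (hs | ⟨t, rfl⟩)
    · exact Or.inl (hI.1.mul_mem c hs)
    · exact Or.inr ⟨c * t, mul_assoc c t a⟩
  have hIJ : I ⊆ J := Set.subset_union_left.trans (Multiring.subset_finiteSums _)
  have haJ : a ∈ J := Multiring.subset_finiteSums _ (Or.inr ⟨1, one_mul a⟩)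
  have h1J : (1 : A) ∈ J := hI.one_mem hJ hIJ haJ ha
  have hb : 1 * b ∈ Multiring.finiteSums I := by
    refine Multiring.mul_mem_finiteSums b h1J ?_
    rintro _ (hs | ⟨t, rfl⟩)
    · exact mul_comm b _ ▸ hI.1.mul_mem b hs
    · exact mul_assoc t a b ▸ hI.1.mul_mem t hab
  exact hI.1.finiteSums_subset (one_mul b ▸ hb)
end

section
/- Let A be a multiring and I an ideal of A. Then I is a prime ideal if and only if 1 ∉ I and the quotient multiring A/I is a multidomain. -/
universe u v

namespace Multiring

variable {A : Type u} [Multiring A]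

theorem neg_zero : -(0 : A) = 0 :=
  ((mem_madd_zero 0 (-0)).1 (madd_rev_left 0 0 0 ((mem_madd_zero 0 0).2 rfl))).symm

theorem simI_zero_iff (I : Set A) (a : A) : simI I a 0 ↔ a ∈ I := by
  simp only [simI, Multiring.neg_zero, mem_madd_zero, exists_eq_left]

end Multiring

/-- An ideal `I` is prime iff `1 ∉ I` and the quotient multiring `A/I` is a
multidomain (its product is `[a][b] = [ab]`, its zero is `[0]`, and equality of
classes is the relation `simI I`). -/
theorem prime_iff_quotient_multidomain {A : Type u} [Multiring A] (I : Set A)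
    (hI : Multiring.IsIdeal I) :
    Multiring.IsPrimeIdeal I ↔
      ((1 : A) ∉ I ∧ ∀ a b : A,
        Multiring.simI I (a * b) 0 → Multiring.simI I a 0 ∨ Multiring.simI I b 0) := by
  simp only [Multiring.IsPrimeIdeal, Multiring.simI_zero_iff, and_iff_right hI]
end

section
/- Let A be a multiring and S, T ⊆ A multiplicative sets. Then S̄ = {x ∈ A : xs ∈ S for some s ∈ S} is a multiplicative set which is cancellative (i.e., if xs ∈ S̄ with s ∈ S̄ then x ∈ S̄), and the Marshall equivalence relations ∼_S and ∼_T on A coincide if and only if S̄ = T̄. In particular A/ₘS̄ = A/ₘS. -/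
universe u v

/-! An element of `S̄` is carried into `S` by multiplication with a suitable element of `S`, and
finitely many elements of `S̄` share such a multiplier. Multiplying by a common multiplier turns
witnesses from `S̄` in `∼_{S̄}` and in the sum of `A/ₘS̄` into witnesses from `S`. Finally
`a ∼_S 1` iff `a ∈ S̄`, so `∼_S` determines `S̄`, and `∼_S = ∼_{S̄}` shows the converse. -/

namespace Multiring

variable {A : Type u} [Multiring A] {S : Set A}

lemma subset_mbar (h1 : (1 : A) ∈ S) : S ⊆ mbar S :=
  fun x hx => ⟨1, h1, by rwa [mul_one]⟩

lemma exists_mul_mem_of_mem_mbar (hS : IsMultiplicative S) {s t : A} (hs : s ∈ mbar S)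
    (ht : t ∈ mbar S) : ∃ d ∈ S, s * d ∈ S ∧ t * d ∈ S := by
  obtain ⟨u, hu, hsu⟩ := hs
  obtain ⟨v, hv, htv⟩ := ht
  refine ⟨u * v, hS.2 u hu v hv, ?_, ?_⟩
  · rw [← mul_assoc]
    exact hS.2 _ hsu _ hv
  · rw [mul_left_comm]
    exact hS.2 _ hu _ htv

lemma mbar_isMultiplicative (hS : IsMultiplicative S) : IsMultiplicative (mbar S) := by
  refine ⟨subset_mbar hS.1 hS.1, fun s hs t ht => ?_⟩
  obtain ⟨d, hd, hsd, htd⟩ := exists_mul_mem_of_mem_mbar hS hs ht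
  exact ⟨d * d, hS.2 d hd d hd, by rw [mul_mul_mul_comm]; exact hS.2 _ hsd _ htd⟩

lemma mem_mbar_of_mul_mem_mbar (hS : IsMultiplicative S) {x s : A} (hs : s ∈ mbar S)
    (hxs : x * s ∈ mbar S) : x ∈ mbar S := by
  obtain ⟨d, hd, hsd, hxsd⟩ := exists_mul_mem_of_mem_mbar hS hs hxs
  exact ⟨s * d, hsd, by rwa [← mul_assoc]⟩

lemma simM_one_iff_mem_mbar {x : A} : simM S x 1 ↔ x ∈ mbar S := by
  constructor
  · rintro ⟨s, hs, t, ht, h⟩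
    exact ⟨s, hs, by rwa [h, one_mul]⟩
  · rintro ⟨s, hs, hxs⟩
    exact ⟨s, hs, x * s, hxs, (one_mul _).symm⟩

lemma simM_mbar_iff (hS : IsMultiplicative S) {a b : A} : simM (mbar S) a b ↔ simM S a b := by
  constructor
  · rintro ⟨s, hs, t, ht, h⟩
    obtain ⟨d, -, hsd, htd⟩ := exists_mul_mem_of_mem_mbar hS hs ht
    exact ⟨s * d, hsd, t * d, htd, by rw [← mul_assoc, ← mul_assoc, h]⟩
  · rintro ⟨s, hs, t, ht, h⟩
    exact ⟨s, subset_mbar hS.1 hs, t, subset_mbar hS.1 ht, h⟩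

lemma qmemM_mbar_iff (hS : IsMultiplicative S) {a b c : A} :
    qmemM (mbar S) a b c ↔ qmemM S a b c := by
  constructor
  · rintro ⟨s, hs, t, ht, w, ⟨z, hz, hwz⟩, h⟩
    obtain ⟨d, hd, hsd, htd⟩ := exists_mul_mem_of_mem_mbar hS hs ht
    refine ⟨s * (d * z), ?_, t * (d * z), ?_, w * (d * z), ?_, ?_⟩
    · rw [← mul_assoc]; exact hS.2 _ hsd _ hz
    · rw [← mul_assoc]; exact hS.2 _ htd _ hz
    · rw [mul_comm d, ← mul_assoc]; exact hS.2 _ hwz _ hd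
    · simpa only [mul_assoc] using madd_mul _ _ _ (d * z) h
  · rintro ⟨s, hs, t, ht, w, hw, h⟩
    exact ⟨s, subset_mbar hS.1 hs, t, subset_mbar hS.1 ht, w, subset_mbar hS.1 hw, h⟩

lemma simM_iff_simM_iff_mbar_eq {T : Set A} (hS : IsMultiplicative S)
    (hT : IsMultiplicative T) : (∀ a b : A, simM S a b ↔ simM T a b) ↔ mbar S = mbar T := by
  constructor
  · intro h
    ext x
    rw [← simM_one_iff_mem_mbar, ← simM_one_iff_mem_mbar, h]
  · intro h a b
    rw [← simM_mbar_iff hS, ← simM_mbar_iff hT, h]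

end Multiring

/-- `S̄` is a cancellative multiplicative set, the Marshall equivalences of `S`
and `T` coincide iff `S̄ = T̄`, and `A/ₘS̄ = A/ₘS` (same classes and same
multivalued sum). -/
theorem mbar_cancellative_and_sim_eq {A : Type u} [Multiring A] (S T : Set A)
    (hS : Multiring.IsMultiplicative S) (hT : Multiring.IsMultiplicative T) :
    Multiring.IsMultiplicative (Multiring.mbar S) ∧
    (∀ x s : A, s ∈ Multiring.mbar S → x * s ∈ Multiring.mbar S →
      x ∈ Multiring.mbar S) ∧
    ((∀ a b : A, Multiring.simM S a b ↔ Multiring.simM T a b) ↔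
      Multiring.mbar S = Multiring.mbar T) ∧
    (∀ a b : A, Multiring.simM (Multiring.mbar S) a b ↔ Multiring.simM S a b) ∧
    (∀ a b c : A, Multiring.qmemM (Multiring.mbar S) a b c ↔
      Multiring.qmemM S a b c) :=
  ⟨Multiring.mbar_isMultiplicative hS,
    fun _ _ => Multiring.mem_mbar_of_mul_mem_mbar hS,
    Multiring.simM_iff_simM_iff_mbar_eq hS hT,
    fun _ _ => Multiring.simM_mbar_iff hS,
    fun _ _ _ => Multiring.qmemM_mbar_iff hS⟩
end

section
/- Let A be a hyperring and S ⊆ A a multiplicative set. Then the Marshall quotient A/ₘS is a hyperring. -/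
universe u v

namespace Multiring

variable {A : Type u} [Multiring A] {S : Set A}

theorem qmemM_of_mem_madd (hS : (1 : A) ∈ S) {a b c t u : A} (ht : t ∈ S) (hu : u ∈ S)
    (h : a ∈ madd (b * t) (c * u)) : qmemM S a b c :=
  ⟨1, hS, t, ht, u, hu, by rwa [mul_one]⟩

theorem simM_of_mul_eq (hS : (1 : A) ∈ S) {a b s : A} (hs : s ∈ S) (h : a * s = b) :
    simM S a b :=
  ⟨s, hs, 1, hS, by rw [mul_one, h]⟩

end Multiring

/-- If `A` is a hyperring and `S` a multiplicative set, then the Marshall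
quotient `A/ₘS` is a hyperring: whenever `[x] ∈ [b][d] + [c][d]` there is `a`
with `[a] ∈ [b] + [c]` and `[x] = [a][d]`. -/
theorem marshall_quotient_isHyperring {A : Type u} [Multiring A]
    (hA : Multiring.IsHyperring A) (S : Set A)
    (hS : Multiring.IsMultiplicative S) :
    ∀ x b c d : A, Multiring.qmemM S x (b * d) (c * d) →
      ∃ a : A, Multiring.qmemM S a b c ∧ Multiring.simM S x (a * d) := by
  rintro x b c d ⟨s, hs, t, ht, u, hu, h⟩
  -- absorb the weights `t, u ∈ S` into `b, c`, so that strong distributivity in `A` applies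
  rw [mul_right_comm b, mul_right_comm c] at h
  obtain ⟨a, ha, hxs⟩ := hA _ _ _ _ h
  exact ⟨a, Multiring.qmemM_of_mem_madd hS.1 ht hu ha, Multiring.simM_of_mul_eq hS.1 hs hxs⟩
end

section
/- Let A be a multiring. For every prime cone P ⊆ A, the map σ_P : A → 3 defined by σ_P(a) = 1 if a ∈ P∖(-P), σ_P(a) = 0 if a ∈ P∩(-P), and σ_P(a) = -1 if a ∈ (-P)∖P, is a multiring morphism; conversely, for every multiring morphism σ : A → 3 the set σ⁻¹({0,1}) is a prime cone of A; and these two assignments are mutually inverse bijections between the set of prime cones of A and the set sper(A) of morphisms A → 3. -/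
universe u v

/-!
Both `P ↦ σ_P` and `σ ↦ σ⁻¹{0,1}` are governed by the dictionary `0 ≤ σ_P a ↔ a ∈ P` and
`σ_P (-a) = -σ_P a`. Under it, `P + P ⊆ P` applied to the six rotations
`a ∈ b + c`, `c ∈ -b + a`, `b ∈ a + (-c)` and their negatives is exactly the sum of the
hyperfield `3`, the prime ideal `P ∩ -P` is the zero set of `σ_P`, and primality of
`P ∩ -P` makes `σ_P` multiplicative. The two maps are inverse because a sign is
determined by whether it and its negative are nonnegative.
-/

namespace Multiring

variable {A : Type u} [Multiring A]

theorem zero_mem_madd_neg_self (a : A) : (0 : A) ∈ madd (-a) a :=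
  madd_rev_left a a 0 ((mem_madd_zero a a).2 rfl)

instance : InvolutiveNeg A where
  neg_neg a := ((mem_madd_zero _ _).1 (madd_rev_left 0 (-a) a (zero_mem_madd_neg_self a))).symm

protected theorem neg_mul (a b : A) : -a * b = -(a * b) := by
  have h := madd_mul 0 (-a) a b (zero_mem_madd_neg_self a)
  rw [mul_comm 0 b, mul_zero'] at h
  rw [(mem_madd_zero _ _).1 (madd_rev_left _ _ _ h), neg_neg]

instance : HasDistribNeg A where
  neg_neg := neg_neg
  neg_mul := Multiring.neg_mul
  mul_neg a b := by rw [mul_comm, Multiring.neg_mul, mul_comm]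

theorem neg_mem_madd_neg {a b c : A} (h : a ∈ madd b c) : -a ∈ madd (-b) (-c) := by
  simpa only [mul_neg_one] using madd_mul a b c (-1) h

theorem mem_signAdd_iff {x y z : SignType} :
    x ∈ signAdd y z ↔
      (0 ≤ y → 0 ≤ z → 0 ≤ x) ∧ (0 ≤ -y → 0 ≤ -z → 0 ≤ -x) ∧
      (0 ≤ -y → 0 ≤ x → 0 ≤ z) ∧ (0 ≤ y → 0 ≤ -x → 0 ≤ -z) ∧
      (0 ≤ x → 0 ≤ -z → 0 ≤ y) ∧ (0 ≤ -x → 0 ≤ z → 0 ≤ -y) := by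
  cases x <;> cases y <;> cases z <;> simp [signAdd]

section PrimeCone

variable {P : Set A}

theorem zero_le_sigmaOf_iff {a : A} : 0 ≤ sigmaOf P a ↔ a ∈ P := by
  unfold sigmaOf
  split_ifs <;> simp_all

theorem sigmaOf_eq_zero_iff {a : A} : sigmaOf P a = 0 ↔ a ∈ P ∧ -a ∈ P := by
  unfold sigmaOf
  split_ifs <;> simp_all

theorem sigmaOf_eq_one_iff {a : A} : sigmaOf P a = 1 ↔ a ∈ P ∧ -a ∉ P := by
  unfold sigmaOf
  split_ifs <;> simp_all

theorem setOf_sigmaOf_nonneg : {a : A | sigmaOf P a = 0 ∨ sigmaOf P a = 1} = P := by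
  ext a
  exact SignType.nonneg_iff.symm.trans zero_le_sigmaOf_iff

theorem sigmaOf_neg (htot : ∀ a : A, a ∈ P ∨ -a ∈ P) (a : A) :
    sigmaOf P (-a) = -sigmaOf P a := by
  unfold sigmaOf
  have := htot a
  split_ifs <;> simp_all

theorem sigmaOf_mem_signAdd (hadd : ∀ a ∈ P, ∀ b ∈ P, madd a b ⊆ P)
    (htot : ∀ a : A, a ∈ P ∨ -a ∈ P) {a b c : A} (h : a ∈ madd b c) :
    sigmaOf P a ∈ signAdd (sigmaOf P b) (sigmaOf P c) := by
  have closed : ∀ {x y z : A}, x ∈ madd y z →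
      0 ≤ sigmaOf P y → 0 ≤ sigmaOf P z → 0 ≤ sigmaOf P x := by
    simp only [zero_le_sigmaOf_iff]
    exact fun hx hy hz => hadd _ hy _ hz hx
  have hc : c ∈ madd (-b) a := madd_rev_left _ _ _ h
  have hb : b ∈ madd a (-c) := madd_rev_right _ _ _ h
  have hc' := neg_mem_madd_neg hc
  have hb' := neg_mem_madd_neg hb
  rw [neg_neg] at hc' hb'
  simp only [mem_signAdd_iff, ← sigmaOf_neg htot]
  exact ⟨closed h, closed (neg_mem_madd_neg h), closed hc, closed hc', closed hb, closed hb'⟩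

theorem sigmaOf_mul_of_mem (hP : IsPrimeCone P) {a b : A} (ha : a ∈ P) (hb : b ∈ P) :
    sigmaOf P (a * b) = sigmaOf P a * sigmaOf P b := by
  obtain ⟨-, -, hmul, -, ⟨-, -, hideal⟩, -, hprime⟩ := hP
  by_cases hap : a ∈ P ∧ -a ∈ P
  · have hab : a * b ∈ P ∧ -(a * b) ∈ P := mul_comm b a ▸ hideal b a hap
    rw [sigmaOf_eq_zero_iff.2 hab, sigmaOf_eq_zero_iff.2 hap, zero_mul]
  by_cases hbp : b ∈ P ∧ -b ∈ P
  · rw [sigmaOf_eq_zero_iff.2 (hideal a b hbp), sigmaOf_eq_zero_iff.2 hbp, mul_zero]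
  have habp : ¬(a * b ∈ P ∧ -(a * b) ∈ P) := fun h => (hprime a b h).elim hap hbp
  rw [sigmaOf_eq_one_iff.2 ⟨ha, fun h => hap ⟨ha, h⟩⟩, sigmaOf_eq_one_iff.2 ⟨hb, fun h => hbp ⟨hb, h⟩⟩,
    sigmaOf_eq_one_iff.2 ⟨hmul a ha b hb, fun h => habp ⟨hmul a ha b hb, h⟩⟩, mul_one]

theorem sigmaOf_mul (hP : IsPrimeCone P) (a b : A) :
    sigmaOf P (a * b) = sigmaOf P a * sigmaOf P b := by
  obtain ⟨-, -, -, htot, -⟩ := id hP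
  rcases htot a with ha | ha <;> rcases htot b with hb | hb <;>
    simpa only [neg_mul, mul_neg, neg_neg, sigmaOf_neg htot, neg_inj] using
      sigmaOf_mul_of_mem hP ha hb

theorem IsPrimeCone.isSignMorphism_sigmaOf (hP : IsPrimeCone P) : IsSignMorphism (sigmaOf P) := by
  obtain ⟨hsq, hadd, -, htot, hideal, hone, -⟩ := id hP
  have h1 : (1 : A) ∈ P := one_mul (1 : A) ▸ hsq 1
  exact ⟨fun _ _ _ => sigmaOf_mem_signAdd hadd htot, sigmaOf_mul hP, sigmaOf_neg htot,
    sigmaOf_eq_zero_iff.2 hideal.zero_mem, sigmaOf_eq_one_iff.2 ⟨h1, fun h => hone ⟨h1, h⟩⟩⟩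

end PrimeCone

section SignMorphism

variable {σ : A → SignType}

theorem IsSignMorphism.isPrimeIdeal_ker (hσ : IsSignMorphism σ) : IsPrimeIdeal {x : A | σ x = 0} := by
  obtain ⟨hadd, hmul, -, h0, h1⟩ := hσ
  refine ⟨⟨⟨0, h0⟩, fun a ha b hb x hx => ?_, fun a b hb => ?_⟩, ?_, fun a b hab => ?_⟩
  · simpa [ha.out, hb.out, signAdd] using hadd x a b hx
  · show σ (a * b) = 0
    rw [hmul, hb.out, mul_zero]
  · show σ 1 ≠ 0
    rw [h1]
    decide
  · exact mul_eq_zero.1 (hmul a b ▸ hab)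

theorem IsSignMorphism.isPrimeCone (hσ : IsSignMorphism σ) :
    IsPrimeCone {a : A | σ a = 0 ∨ σ a = 1} := by
  simp only [← SignType.nonneg_iff]
  have hprime := hσ.isPrimeIdeal_ker
  obtain ⟨hadd, hmul, hneg, -, -⟩ := hσ
  have hker : {x : A | 0 ≤ σ x ∧ 0 ≤ σ (-x)} = {x : A | σ x = 0} := by
    ext x
    simp only [Set.mem_ofPred_eq, hneg]
    generalize σ x = s
    decide +revert
  refine ⟨fun a => ?_, fun a ha b hb x hx => (mem_signAdd_iff.1 (hadd x a b hx)).1 ha hb,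
    fun a (ha : 0 ≤ σ a) b (hb : 0 ≤ σ b) => ?_, fun a => ?_, hker ▸ hprime⟩
  · show 0 ≤ σ (a * a)
    rw [hmul]
    generalize σ a = s
    decide +revert
  · show 0 ≤ σ (a * b)
    rw [hmul]
    generalize σ a = s at ha
    generalize σ b = t at hb
    decide +revert
  · show 0 ≤ σ a ∨ 0 ≤ σ (-a)
    rw [hneg]
    generalize σ a = s
    decide +revert

theorem sigmaOf_setOf_nonneg (hneg : ∀ a : A, σ (-a) = -σ a) :
    sigmaOf {a : A | σ a = 0 ∨ σ a = 1} = σ := by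
  funext a
  unfold sigmaOf
  simp only [Set.mem_ofPred_eq, hneg]
  split_ifs <;> cases h : σ a <;> simp_all

end SignMorphism

end Multiring

/-- Prime cones of `A` correspond bijectively to multiring morphisms `A → 3`:
`P ↦ σ_P` and `σ ↦ σ⁻¹({0,1})` are mutually inverse. -/
theorem primeCone_signMorphism_bijection {A : Type u} [Multiring A] :
    (∀ P : Set A, Multiring.IsPrimeCone P →
      Multiring.IsSignMorphism (Multiring.sigmaOf P)) ∧
    (∀ σ : A → SignType, Multiring.IsSignMorphism σ →
      Multiring.IsPrimeCone {a : A | σ a = 0 ∨ σ a = 1}) ∧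
    (∀ P : Set A, Multiring.IsPrimeCone P →
      {a : A | Multiring.sigmaOf P a = 0 ∨ Multiring.sigmaOf P a = 1} = P) ∧
    (∀ σ : A → SignType, Multiring.IsSignMorphism σ →
      Multiring.sigmaOf {a : A | σ a = 0 ∨ σ a = 1} = σ) :=
  ⟨fun _ hP => hP.isSignMorphism_sigmaOf, fun _ hσ => hσ.isPrimeCone,
    fun _ _ => Multiring.setOf_sigmaOf_nonneg, fun _ hσ => Multiring.sigmaOf_setOf_nonneg hσ.2.2.1⟩
end
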